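/- For any dimension d ≥ 1 there exists ε > 0 such that for every a > 0, there do not exist d+2 points x_1,…,x_{d+2} in ℝ^d with a(1-ε) ≤ ‖x_i - x_j‖ ≤ a(1+ε) for all 1 ≤ i < j ≤ d+2. -/

import Mathlib

/-!
Any `d + 2` points of `ℝ^d` are affinely dependent: some weights `w ≠ 0` satisfy `∑ wᵢ = 0`
and `∑ wᵢ • xᵢ = 0`. For such weights `∑ᵢⱼ wᵢ wⱼ ‖xᵢ - xⱼ‖² = -2 ‖∑ wᵢ • xᵢ‖² = 0`, hence the
quadratic form of the matrix `a² - ‖xᵢ - xⱼ‖²` vanishes at `w`. If all distances are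
`a (1 ± ε)`, this matrix has diagonal `a²` and off-diagonal entries of size at most `3εa²`, so
for `ε < 1 / (3 (d + 2))` its quadratic form is positive definite (Gershgorin), a contradiction.
-/

open Finset Module

theorem exists_affine_relation_of_finrank_add_one_lt {k V ι : Type*} [Field k] [AddCommGroup V]
    [Module k V] [FiniteDimensional k V] [Fintype ι] (x : ι → V)
    (h : finrank k V + 1 < Fintype.card ι) :
    ∃ (s : Finset ι) (w : ι → k), ∑ i ∈ s, w i = 0 ∧ ∑ i ∈ s, w i • x i = 0 ∧
      ∃ i ∈ s, w i ≠ 0 := by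
  have hdep : ¬ AffineIndependent k x := fun hind =>
    (hind.card_le_finrank_succ.trans
      (Nat.add_le_add_right (Submodule.finrank_le _) 1)).not_gt h
  simpa [affineIndependent_iff] using hdep

theorem sum_sum_mul_norm_sub_sq_eq_zero {ι E : Type*} [NormedAddCommGroup E]
    [InnerProductSpace ℝ E] (s : Finset ι) (w : ι → ℝ) (x : ι → E)
    (hw : ∑ i ∈ s, w i = 0) (hwx : ∑ i ∈ s, w i • x i = 0) :
    ∑ i ∈ s, ∑ j ∈ s, w i * w j * ‖x i - x j‖ ^ 2 = 0 := by
  have h := inner_sum_smul_sum_smul_of_sum_eq_zero x hw x hw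
  simp only [hwx, inner_zero_left, ← sq] at h
  linarith

theorem sub_mul_card_mul_sum_sq_le_sum_sum_mul {ι : Type*} (s : Finset ι) (w : ι → ℝ)
    (A : ι → ι → ℝ) {c δ : ℝ} (hδ : 0 ≤ δ) (hdiag : ∀ i ∈ s, A i i = c)
    (hoff : ∀ i ∈ s, ∀ j ∈ s, i ≠ j → |A i j| ≤ δ) :
    (c - δ * #s) * ∑ i ∈ s, w i ^ 2 ≤ ∑ i ∈ s, ∑ j ∈ s, w i * w j * A i j := by
  classical
  have hsplit : ∀ i ∈ s, ∑ j ∈ s, w i * w j * A i j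
      = c * w i ^ 2 + ∑ j ∈ s.erase i, w i * w j * A i j := by
    intro i hi
    rw [← add_sum_erase _ _ hi, hdiag i hi]
    ring
  have hoffsum : ∑ i ∈ s, ∑ j ∈ s.erase i, δ * (|w i| * |w j|) ≤ δ * #s * ∑ i ∈ s, w i ^ 2 :=
    calc ∑ i ∈ s, ∑ j ∈ s.erase i, δ * (|w i| * |w j|)
        ≤ ∑ i ∈ s, ∑ j ∈ s, δ * (|w i| * |w j|) := by
          gcongr with i
          exact erase_subset i s
      _ = δ * (∑ i ∈ s, |w i|) ^ 2 := by rw [sq, sum_mul_sum]; simp only [mul_sum]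
      _ ≤ δ * (#s * ∑ i ∈ s, |w i| ^ 2) := by gcongr; exact sq_sum_le_card_mul_sum_sq
      _ = δ * #s * ∑ i ∈ s, w i ^ 2 := by simp only [sq_abs, mul_assoc]
  have hoffbound : -∑ i ∈ s, ∑ j ∈ s.erase i, δ * (|w i| * |w j|) ≤
      ∑ i ∈ s, ∑ j ∈ s.erase i, w i * w j * A i j := by
    simp only [← sum_neg_distrib]
    gcongr with i hi j hj
    have hA := hoff i hi j (mem_of_mem_erase hj) (ne_of_mem_erase hj).symm
    calc -(δ * (|w i| * |w j|)) ≤ -(|A i j| * (|w i| * |w j|)) := by gcongr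
      _ = -|w i * w j * A i j| := by rw [abs_mul, abs_mul]; ring
      _ ≤ w i * w j * A i j := neg_abs_le _
  rw [sum_congr rfl hsplit, sum_add_distrib, ← mul_sum]
  linarith

theorem sub_mul_card_mul_sum_sq_nonpos_of_affine_relation {ι E : Type*} [NormedAddCommGroup E]
    [InnerProductSpace ℝ E] (s : Finset ι) (w : ι → ℝ) (x : ι → E) {c δ : ℝ} (hδ : 0 ≤ δ)
    (hw : ∑ i ∈ s, w i = 0) (hwx : ∑ i ∈ s, w i • x i = 0)
    (hx : ∀ i ∈ s, ∀ j ∈ s, i ≠ j → |c - ‖x i - x j‖ ^ 2| ≤ δ) :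
    (c - δ * #s) * ∑ i ∈ s, w i ^ 2 ≤ 0 := by
  have hform : ∑ i ∈ s, ∑ j ∈ s, w i * w j * (c - ‖x i - x j‖ ^ 2) = 0 := by
    simp only [mul_sub, sum_sub_distrib, sum_sum_mul_norm_sub_sq_eq_zero s w x hw hwx,
      ← sum_mul, ← mul_sum, hw, mul_zero, zero_mul, sum_const_zero, sub_zero]
  simpa [hform] using
    sub_mul_card_mul_sum_sq_le_sum_sum_mul s w (fun i j => c - ‖x i - x j‖ ^ 2) hδ (by simp) hx

theorem abs_sq_sub_sq_le {a r ε : ℝ} (ha : 0 ≤ a) (hε : ε ≤ 1)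
    (hl : a * (1 - ε) ≤ r) (hu : r ≤ a * (1 + ε)) : |a ^ 2 - r ^ 2| ≤ 3 * ε * a ^ 2 := by
  have hr : 0 ≤ r := by nlinarith
  rw [abs_le]
  constructor <;> nlinarith [mul_le_mul hl hl (by nlinarith) hr, mul_le_mul hu hu hr (by nlinarith),
    mul_nonneg (mul_nonneg ha ha) (sub_nonneg.2 hε)]

theorem no_equidistant_configuration_general (d : ℕ) :
    ∃ ε : ℝ, 0 < ε ∧ ∀ a : ℝ, 0 < a →
      ¬ ∃ x : Fin (d + 2) → EuclideanSpace ℝ (Fin d),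
          ∀ i j : Fin (d + 2), i ≠ j →
            a * (1 - ε) ≤ ‖x i - x j‖ ∧ ‖x i - x j‖ ≤ a * (1 + ε) := by
  set ε : ℝ := 1 / (4 * (d + 2)) with hε
  have hε₁ : ε ≤ 1 := by rw [hε, div_le_one (by positivity)]; linarith [d.cast_nonneg (α := ℝ)]
  refine ⟨ε, by positivity, fun a ha ⟨x, hx⟩ => ?_⟩
  obtain ⟨s, w, hw, hwx, i, hi, hwi⟩ :=
    exists_affine_relation_of_finrank_add_one_lt (k := ℝ) x (by simp)
  have key := sub_mul_card_mul_sum_sq_nonpos_of_affine_relation s w x (by positivity) hw hwx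
    fun i _ j _ hij => abs_sq_sub_sq_le ha.le hε₁ (hx i j hij).1 (hx i j hij).2
  have hS : 0 < ∑ i ∈ s, w i ^ 2 := sum_pos' (fun i _ => sq_nonneg (w i)) ⟨i, hi, by positivity⟩
  have hcard : (#s : ℝ) ≤ d + 2 := by exact_mod_cast (card_le_univ s).trans (by simp)
  have hsmall : 3 * ε * #s ≤ 3 / 4 := by
    calc 3 * ε * #s ≤ 3 * ε * (d + 2) := by gcongr
      _ = 3 / 4 := by rw [hε]; field_simp
  nlinarith [mul_pos (pow_pos ha 2) hS]

theorem no_equidistant_configuration (d : ℕ) (hd : 1 ≤ d) :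
    ∃ ε : ℝ, 0 < ε ∧ ∀ a : ℝ, 0 < a →
      ¬ ∃ x : Fin (d + 2) → EuclideanSpace ℝ (Fin d),
          ∀ i j : Fin (d + 2), i ≠ j →
            a * (1 - ε) ≤ ‖x i - x j‖ ∧ ‖x i - x j‖ ≤ a * (1 + ε) :=
  no_equidistant_configuration_general d
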